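/- arXiv:2604.09325 — 6 statements merged into one kernel-verified Lean document; each statement's English description precedes it below -/
import Mathlib

section
/- Let μ ∈ ℝ^{Nx} and ν ∈ ℝ^{Ny} be probability vectors and suppose the dual optimal value J(μ,ν) is attained by some dual-admissible pair. Then there exists a dual-admissible pair (φ*, ψ*) attaining J(μ,ν) such that 0 ≤ φ*_i ≤ 2‖C‖_∞ for all 1 ≤ i ≤ Nx and −3‖C‖_∞ ≤ ψ*_j ≤ ‖C‖_∞ for all 1 ≤ j ≤ Ny; in particular ‖φ*‖_∞ ≤ 2‖C‖_∞ and ‖ψ*‖_∞ ≤ 3‖C‖_∞. -/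
open scoped BigOperators

/-- The dual optimal value `J(μ,ν)` of discrete optimal transport with cost `C`. -/
noncomputable def dualValue {Nx Ny : ℕ} (C : Fin Nx → Fin Ny → ℝ)
    (μ : Fin Nx → ℝ) (ν : Fin Ny → ℝ) : ℝ :=
  sSup {r : ℝ | ∃ φ : Fin Nx → ℝ, ∃ ψ : Fin Ny → ℝ,
    (∀ i j, φ i + ψ j ≤ C i j) ∧ r = (∑ i, φ i * μ i) + (∑ j, ψ j * ν j)}

private lemma inf_attained {α : Type*} [Finite α] [Nonempty α] (f : α → ℝ) :
    ∃ a, (⨅ x, f x) = f a ∧ ∀ x, f a ≤ f x := by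
  obtain ⟨a, ha⟩ := Finite.exists_min f
  exact ⟨a, le_antisymm (ciInf_le (Finite.bddBelow_range f) a) (le_ciInf ha), ha⟩

theorem stmt3 {Nx Ny : ℕ} (hNx : 0 < Nx) (hNy : 0 < Ny)
    (C : Fin Nx → Fin Ny → ℝ) (hC : ∀ i j, 0 ≤ C i j)
    (μ : Fin Nx → ℝ) (ν : Fin Ny → ℝ)
    (hμ : (∀ i, 0 ≤ μ i) ∧ ∑ i, μ i = 1)
    (hν : (∀ j, 0 ≤ ν j) ∧ ∑ j, ν j = 1)
    (hattained : ∃ φ : Fin Nx → ℝ, ∃ ψ : Fin Ny → ℝ,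
      (∀ i j, φ i + ψ j ≤ C i j) ∧
      (∑ i, φ i * μ i) + (∑ j, ψ j * ν j) = dualValue C μ ν) :
    ∃ φ : Fin Nx → ℝ, ∃ ψ : Fin Ny → ℝ,
      (∀ i j, φ i + ψ j ≤ C i j) ∧
      (∑ i, φ i * μ i) + (∑ j, ψ j * ν j) = dualValue C μ ν ∧
      (∀ i, 0 ≤ φ i ∧ φ i ≤ 2 * (⨆ i', ⨆ j', |C i' j'|)) ∧
      (∀ j, -(3 * (⨆ i', ⨆ j', |C i' j'|)) ≤ ψ j ∧ ψ j ≤ (⨆ i', ⨆ j', |C i' j'|)) ∧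
      (⨆ i, |φ i|) ≤ 2 * (⨆ i', ⨆ j', |C i' j'|) ∧
      (⨆ j, |ψ j|) ≤ 3 * (⨆ i', ⨆ j', |C i' j'|) := by
  haveI : Nonempty (Fin Nx) := ⟨⟨0, hNx⟩⟩
  haveI : Nonempty (Fin Ny) := ⟨⟨0, hNy⟩⟩
  set M : ℝ := ⨆ i', ⨆ j', |C i' j'| with hMdef
  have hCM : ∀ i j, C i j ≤ M := by
    intro i j
    calc C i j ≤ |C i j| := le_abs_self _
      _ ≤ ⨆ j', |C i j'| := le_ciSup (Finite.bddAbove_range fun j' => |C i j'|) j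
      _ ≤ M := le_ciSup (Finite.bddAbove_range fun i' => ⨆ j', |C i' j'|) i
  have hM0 : 0 ≤ M := le_trans (hC ⟨0, hNx⟩ ⟨0, hNy⟩) (hCM _ _)
  set S : Set ℝ := {r : ℝ | ∃ φ : Fin Nx → ℝ, ∃ ψ : Fin Ny → ℝ,
    (∀ i j, φ i + ψ j ≤ C i j) ∧ r = (∑ i, φ i * μ i) + (∑ j, ψ j * ν j)} with hSdef
  -- S is bounded above
  have hbdd : BddAbove S := by
    refine ⟨∑ i, ∑ j, C i j * (μ i * ν j), ?_⟩
    rintro r ⟨φ, ψ, hadm, rfl⟩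
    have h1 : (∑ i, φ i * μ i) + (∑ j, ψ j * ν j)
        = ∑ i, ∑ j, (φ i + ψ j) * (μ i * ν j) := by
      have e1 : ∑ i, φ i * μ i = ∑ i, ∑ j, φ i * (μ i * ν j) := by
        refine Finset.sum_congr rfl fun i _ => ?_
        rw [← Finset.mul_sum, ← Finset.mul_sum, hν.2, mul_one]
      have e2 : ∑ j, ψ j * ν j = ∑ i, ∑ j, ψ j * (μ i * ν j) := by
        rw [Finset.sum_comm]
        refine Finset.sum_congr rfl fun j _ => ?_
        have : ∑ i, ψ j * (μ i * ν j) = ψ j * ν j * ∑ i, μ i := by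
          rw [Finset.mul_sum]
          exact Finset.sum_congr rfl fun i _ => by ring
        rw [this, hμ.2, mul_one]
      rw [e1, e2, ← Finset.sum_add_distrib]
      refine Finset.sum_congr rfl fun i _ => ?_
      rw [← Finset.sum_add_distrib]
      exact Finset.sum_congr rfl fun j _ => by ring
    rw [h1]
    refine Finset.sum_le_sum fun i _ => Finset.sum_le_sum fun j _ => ?_
    exact mul_le_mul_of_nonneg_right (hadm i j) (mul_nonneg (hμ.1 i) (hν.1 j))
  have hdual : dualValue C μ ν = sSup S := rfl
  -- dualValue ≥ 0
  have hdv0 : 0 ≤ dualValue C μ ν := by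
    rw [hdual]
    refine le_csSup hbdd ?_
    exact ⟨fun _ => 0, fun _ => 0, fun i j => by simpa using hC i j, by simp⟩
  obtain ⟨φ, ψ, hadm, hval⟩ := hattained
  -- double c-transform
  set ψ₁ : Fin Ny → ℝ := fun j => ⨅ i, (C i j - φ i) with hψ₁def
  have hψ₁le : ∀ i j, ψ₁ j ≤ C i j - φ i := fun i j =>
    ciInf_le (Finite.bddBelow_range _) i
  have hψψ₁ : ∀ j, ψ j ≤ ψ₁ j := fun j =>
    le_ciInf fun i => by linarith [hadm i j]
  set φ₂ : Fin Nx → ℝ := fun i => ⨅ j, (C i j - ψ₁ j) with hφ₂def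
  have hφ₂le : ∀ i j, φ₂ i ≤ C i j - ψ₁ j := fun i j =>
    ciInf_le (Finite.bddBelow_range _) j
  have hφφ₂ : ∀ i, φ i ≤ φ₂ i := fun i =>
    le_ciInf fun j => by linarith [hψ₁le i j]
  -- oscillation bounds
  have hoscφ₂ : ∀ i i', φ₂ i - φ₂ i' ≤ M := by
    intro i i'
    obtain ⟨j0, hj0, _⟩ := inf_attained (fun j => C i' j - ψ₁ j)
    have h1 : φ₂ i ≤ C i j0 - ψ₁ j0 := hφ₂le i j0
    have h2 : φ₂ i' = C i' j0 - ψ₁ j0 := hj0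
    have := hCM i j0
    have := hC i' j0
    linarith
  have hoscψ₁ : ∀ j j', ψ₁ j - ψ₁ j' ≤ M := by
    intro j j'
    obtain ⟨i0, hi0, _⟩ := inf_attained (fun i => C i j' - φ i)
    have h1 : ψ₁ j ≤ C i0 j - φ i0 := hψ₁le i0 j
    have h2 : ψ₁ j' = C i0 j' - φ i0 := hi0
    have := hCM i0 j
    have := hC i0 j'
    linarith
  -- the shift
  obtain ⟨i0, hti0, hti0min⟩ := inf_attained φ₂
  set t : ℝ := φ₂ i0 with htdef
  set φ' : Fin Nx → ℝ := fun i => φ₂ i - t with hφ'def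
  set ψ' : Fin Ny → ℝ := fun j => ψ₁ j + t with hψ'def
  have hadm' : ∀ i j, φ' i + ψ' j ≤ C i j := by
    intro i j
    have := hφ₂le i j
    simp only [hφ'def, hψ'def]
    linarith
  -- value
  have hsum1 : ∑ i, φ' i * μ i = (∑ i, φ₂ i * μ i) - t := by
    have : ∑ i, φ' i * μ i = (∑ i, φ₂ i * μ i) - t * ∑ i, μ i := by
      rw [Finset.mul_sum, ← Finset.sum_sub_distrib]
      exact Finset.sum_congr rfl fun i _ => by simp [hφ'def]; ring
    rw [this, hμ.2, mul_one]
  have hsum2 : ∑ j, ψ' j * ν j = (∑ j, ψ₁ j * ν j) + t := by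
    have : ∑ j, ψ' j * ν j = (∑ j, ψ₁ j * ν j) + t * ∑ j, ν j := by
      rw [Finset.mul_sum, ← Finset.sum_add_distrib]
      exact Finset.sum_congr rfl fun j _ => by simp [hψ'def]; ring
    rw [this, hν.2, mul_one]
  have hvalle : dualValue C μ ν ≤ (∑ i, φ' i * μ i) + (∑ j, ψ' j * ν j) := by
    rw [hsum1, hsum2, ← hval]
    have h1 : ∑ i, φ i * μ i ≤ ∑ i, φ₂ i * μ i :=
      Finset.sum_le_sum fun i _ => mul_le_mul_of_nonneg_right (hφφ₂ i) (hμ.1 i)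
    have h2 : ∑ j, ψ j * ν j ≤ ∑ j, ψ₁ j * ν j :=
      Finset.sum_le_sum fun j _ => mul_le_mul_of_nonneg_right (hψψ₁ j) (hν.1 j)
    linarith
  have hvalge : (∑ i, φ' i * μ i) + (∑ j, ψ' j * ν j) ≤ dualValue C μ ν := by
    rw [hdual]
    exact le_csSup hbdd ⟨φ', ψ', hadm', rfl⟩
  have hval' : (∑ i, φ' i * μ i) + (∑ j, ψ' j * ν j) = dualValue C μ ν :=
    le_antisymm hvalge hvalle
  -- bounds on φ'
  have hφ'lb : ∀ i, 0 ≤ φ' i := fun i => by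
    simp only [hφ'def, htdef]; linarith [hti0min i]
  have hφ'ub : ∀ i, φ' i ≤ M := fun i => by
    simp only [hφ'def, htdef]; linarith [hoscφ₂ i i0]
  -- bounds on ψ'
  have hψ'ub : ∀ j, ψ' j ≤ M := fun j => by
    have := hφ₂le i0 j
    have := hCM i0 j
    simp only [hψ'def, htdef]
    linarith
  have hψ'lb : ∀ j, -(2 * M) ≤ ψ' j := by
    obtain ⟨j1, hj1⟩ := Finite.exists_max ψ'
    have hsumub : ∑ j, ψ' j * ν j ≤ ψ' j1 := by
      calc ∑ j, ψ' j * ν j ≤ ∑ j, ψ' j1 * ν j :=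
            Finset.sum_le_sum fun j _ => mul_le_mul_of_nonneg_right (hj1 j) (hν.1 j)
        _ = ψ' j1 * ∑ j, ν j := by rw [Finset.mul_sum]
        _ = ψ' j1 := by rw [hν.2, mul_one]
    have hsumφ : ∑ i, φ' i * μ i ≤ M := by
      calc ∑ i, φ' i * μ i ≤ ∑ i, M * μ i :=
            Finset.sum_le_sum fun i _ => mul_le_mul_of_nonneg_right (hφ'ub i) (hμ.1 i)
        _ = M * ∑ i, μ i := by rw [Finset.mul_sum]
        _ = M := by rw [hμ.2, mul_one]
    have hj1lb : -M ≤ ψ' j1 := by linarith [hdv0, hval']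
    intro j
    have : ψ' j1 - ψ' j ≤ M := by
      simp only [hψ'def]
      have := hoscψ₁ j1 j
      linarith
    linarith
  refine ⟨φ', ψ', hadm', hval', ?_, ?_, ?_, ?_⟩
  · exact fun i => ⟨hφ'lb i, by linarith [hφ'ub i]⟩
  · exact fun j => ⟨by linarith [hψ'lb j], hψ'ub j⟩
  · refine ciSup_le fun i => ?_
    rw [abs_le]
    constructor <;> [linarith [hφ'lb i]; linarith [hφ'ub i]]
  · refine ciSup_le fun j => ?_
    rw [abs_le]
    constructor <;> [linarith [hψ'lb j]; linarith [hψ'ub j]]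
end

section
/- Let α, α' ∈ 𝒜 and suppose that for both parameters the dual optimal values J(α) and J(α') are attained by dual-admissible pairs. Then |J(α) − J(α')| ≤ ‖C‖_∞ · (2·max(Kx, Ky) + 3·min(Kx, Ky)) · ‖α − α'‖_∞. -/
open scoped BigOperators


lemma bddR {n : ℕ} (f : Fin n → ℝ) : BddAbove (Set.range f) :=
  (Set.finite_range f).bddAbove

lemma le_M {Nx Ny : ℕ} (C : Fin Nx → Fin Ny → ℝ) (i : Fin Nx) (j : Fin Ny) :
    |C i j| ≤ ⨆ i, ⨆ j, |C i j| :=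
  le_trans (le_ciSup (bddR fun j => |C i j|) j) (le_ciSup (bddR fun i => ⨆ j, |C i j|) i)

lemma pair_val_le {Nx Ny : ℕ} (C : Fin Nx → Fin Ny → ℝ) (hC : ∀ i j, 0 ≤ C i j)
    (μ : Fin Nx → ℝ) (ν : Fin Ny → ℝ)
    (hμ : ∀ i, 0 ≤ μ i) (hμs : ∑ i, μ i = 1)
    (hν : ∀ j, 0 ≤ ν j) (hνs : ∑ j, ν j = 1)
    (φ : Fin Nx → ℝ) (ψ : Fin Ny → ℝ) (hadm : ∀ i j, φ i + ψ j ≤ C i j) :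
    (∑ i, φ i * μ i) + (∑ j, ψ j * ν j) ≤ ⨆ i, ⨆ j, |C i j| := by
  have key : (∑ i, φ i * μ i) + (∑ j, ψ j * ν j)
      = ∑ i, ∑ j, (φ i + ψ j) * (μ i * ν j) := by
    calc (∑ i, φ i * μ i) + (∑ j, ψ j * ν j)
        = (∑ i, φ i * μ i) * (∑ j, ν j) + (∑ i, μ i) * (∑ j, ψ j * ν j) := by
          rw [hνs, hμs]; ring
      _ = ∑ i, ∑ j, (φ i + ψ j) * (μ i * ν j) := by
          rw [Finset.sum_mul_sum, Finset.sum_mul_sum, ← Finset.sum_add_distrib]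
          refine Finset.sum_congr rfl fun i _ => ?_
          rw [← Finset.sum_add_distrib]
          exact Finset.sum_congr rfl fun j _ => by ring
  rw [key]
  calc ∑ i, ∑ j, (φ i + ψ j) * (μ i * ν j)
      ≤ ∑ i, ∑ j, (⨆ i, ⨆ j, |C i j|) * (μ i * ν j) := by
        refine Finset.sum_le_sum fun i _ => Finset.sum_le_sum fun j _ => ?_
        exact mul_le_mul_of_nonneg_right
          (le_trans (hadm i j) (le_trans (le_abs_self _) (le_M C i j)))
          (mul_nonneg (hμ i) (hν j))
    _ = ⨆ i, ⨆ j, |C i j| := by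
        simp only [← Finset.mul_sum]
        simp [Finset.mul_sum, hνs, hμs, ← Finset.sum_mul]



lemma val_le_dual {Nx Ny : ℕ} (C : Fin Nx → Fin Ny → ℝ) (hC : ∀ i j, 0 ≤ C i j)
    (μ : Fin Nx → ℝ) (ν : Fin Ny → ℝ)
    (hμ : ∀ i, 0 ≤ μ i) (hμs : ∑ i, μ i = 1)
    (hν : ∀ j, 0 ≤ ν j) (hνs : ∑ j, ν j = 1)
    (φ : Fin Nx → ℝ) (ψ : Fin Ny → ℝ) (hadm : ∀ i j, φ i + ψ j ≤ C i j) :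
    (∑ i, φ i * μ i) + (∑ j, ψ j * ν j) ≤ dualValue C μ ν := by
  refine le_csSup ⟨⨆ i, ⨆ j, |C i j|, ?_⟩ ⟨φ, ψ, hadm, rfl⟩
  rintro r ⟨φ', ψ', hadm', rfl⟩
  exact pair_val_le C hC μ ν hμ hμs hν hνs φ' ψ' hadm'

/-- replace an admissible pair by one with sup-norm bounds and at least the same value. -/
lemma exists_bounded_pair {Nx Ny : ℕ} (hNx : 0 < Nx) (hNy : 0 < Ny)
    (C : Fin Nx → Fin Ny → ℝ) (hC : ∀ i j, 0 ≤ C i j)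
    (μ : Fin Nx → ℝ) (ν : Fin Ny → ℝ)
    (hμ : ∀ i, 0 ≤ μ i) (hμs : ∑ i, μ i = 1)
    (hν : ∀ j, 0 ≤ ν j) (hνs : ∑ j, ν j = 1)
    (φ : Fin Nx → ℝ) (ψ : Fin Ny → ℝ) (hadm : ∀ i j, φ i + ψ j ≤ C i j) :
    ∃ φ' : Fin Nx → ℝ, ∃ ψ' : Fin Ny → ℝ,
      (∀ i j, φ' i + ψ' j ≤ C i j) ∧
      (∀ i, |φ' i| ≤ ⨆ i, ⨆ j, |C i j|) ∧ (∀ j, |ψ' j| ≤ ⨆ i, ⨆ j, |C i j|) ∧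
      (∑ i, φ i * μ i) + (∑ j, ψ j * ν j) ≤ (∑ i, φ' i * μ i) + (∑ j, ψ' j * ν j) := by
  haveI : NeZero Nx := ⟨hNx.ne'⟩
  haveI : NeZero Ny := ⟨hNy.ne'⟩
  set M := ⨆ i, ⨆ j, |C i j| with hM
  have hneX : (Finset.univ : Finset (Fin Nx)).Nonempty := Finset.univ_nonempty
  have hneY : (Finset.univ : Finset (Fin Ny)).Nonempty := Finset.univ_nonempty
  set φ2 : Fin Nx → ℝ := fun i => Finset.univ.inf' hneY (fun j => C i j - ψ j) with hφ2
  set i0 : Fin Nx := ⟨0, hNx⟩ with hi0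
  set c : ℝ := φ2 i0 with hc
  set φ3 : Fin Nx → ℝ := fun i => φ2 i - c with hφ3
  set ψ3 : Fin Ny → ℝ := fun j => Finset.univ.inf' hneX (fun i => C i j - φ3 i) with hψ3
  have hφ2_ge : ∀ i, φ i ≤ φ2 i := fun i =>
    Finset.le_inf' hneY _ fun j _ => by linarith [hadm i j]
  have hφ2_adm : ∀ i j, φ2 i + ψ j ≤ C i j := fun i j => by
    have := Finset.inf'_le (fun j => C i j - ψ j) (Finset.mem_univ j)
    simp only [hφ2]
    linarith [this]
  have hadm3 : ∀ i j, φ3 i + ψ3 j ≤ C i j := fun i j => by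
    have := Finset.inf'_le (fun i => C i j - φ3 i) (Finset.mem_univ i)
    linarith [this]
  have hψ3_ge : ∀ j, ψ j + c ≤ ψ3 j := fun j =>
    Finset.le_inf' hneX _ fun i _ => by
      have := hφ2_adm i j
      simp only [hφ3]
      linarith
  have hφ3_bd : ∀ i, |φ3 i| ≤ M := by
    intro i
    rw [abs_le]
    constructor
    · obtain ⟨j', _, hj'⟩ := Finset.exists_mem_eq_inf' hneY (fun j => C i j - ψ j)
      have h1 : φ2 i = C i j' - ψ j' := hj'
      have h2 : c ≤ C i0 j' - ψ j' := Finset.inf'_le _ (Finset.mem_univ j')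
      have h3 : |C i0 j'| ≤ M := le_M C i0 j'
      have h4 : C i0 j' ≤ |C i0 j'| := le_abs_self _
      have h5 : 0 ≤ C i j' := hC i j'
      simp only [hφ3]
      linarith
    · obtain ⟨j', _, hj'⟩ := Finset.exists_mem_eq_inf' hneY (fun j => C i0 j - ψ j)
      have h1 : c = C i0 j' - ψ j' := hj'
      have h2 : φ2 i ≤ C i j' - ψ j' := Finset.inf'_le _ (Finset.mem_univ j')
      have h3 : |C i j'| ≤ M := le_M C i j'
      have h4 : C i j' ≤ |C i j'| := le_abs_self _
      have h5 : 0 ≤ C i0 j' := hC i0 j'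
      simp only [hφ3]
      linarith
  have hψ3_bd : ∀ j, |ψ3 j| ≤ M := by
    intro j
    rw [abs_le]
    constructor
    · refine Finset.le_inf' hneX _ fun i _ => ?_
      have h1 : |φ3 i| ≤ M := hφ3_bd i
      have h2 : φ3 i ≤ M := le_trans (le_abs_self _) h1
      have h5 : 0 ≤ C i j := hC i j
      linarith
    · have h2 : ψ3 j ≤ C i0 j - φ3 i0 := Finset.inf'_le _ (Finset.mem_univ i0)
      have h6 : φ3 i0 = 0 := by simp [hφ3, hc]
      have h3 : |C i0 j| ≤ M := le_M C i0 j
      have h4 : C i0 j ≤ |C i0 j| := le_abs_self _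
      linarith
  refine ⟨φ3, ψ3, hadm3, hφ3_bd, hψ3_bd, ?_⟩
  have hx : ∑ i, φ3 i * μ i = (∑ i, φ2 i * μ i) - c := by
    simp only [hφ3, sub_mul, Finset.sum_sub_distrib]
    rw [← Finset.mul_sum, hμs, mul_one]
  have hx2 : ∑ i, φ i * μ i ≤ ∑ i, φ2 i * μ i :=
    Finset.sum_le_sum fun i _ => mul_le_mul_of_nonneg_right (hφ2_ge i) (hμ i)
  have hy : (∑ j, ψ j * ν j) + c ≤ ∑ j, ψ3 j * ν j := by
    have : ∑ j, (ψ j + c) * ν j ≤ ∑ j, ψ3 j * ν j :=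
      Finset.sum_le_sum fun j _ => mul_le_mul_of_nonneg_right (hψ3_ge j) (hν j)
    calc (∑ j, ψ j * ν j) + c = ∑ j, (ψ j + c) * ν j := by
          simp only [add_mul, Finset.sum_add_distrib]
          rw [← Finset.mul_sum, hνs, mul_one]
      _ ≤ _ := this
  linarith

lemma mix_nonneg {K N : ℕ} (base : Fin K → Fin N → ℝ) (α : Fin K → ℝ)
    (hbase : ∀ k, (∀ i, 0 ≤ base k i) ∧ ∑ i, base k i = 1)
    (hα : (∀ k, 0 ≤ α k) ∧ ∑ k, α k = 1) :
    (∀ i, 0 ≤ ∑ k, α k * base k i) ∧ ∑ i, ∑ k, α k * base k i = 1 := by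
  constructor
  · intro i
    exact Finset.sum_nonneg fun k _ => mul_nonneg (hα.1 k) ((hbase k).1 i)
  · rw [Finset.sum_comm]
    calc ∑ k, ∑ i, α k * base k i = ∑ k, α k * ∑ i, base k i := by
          simp [Finset.mul_sum]
      _ = 1 := by simp only [fun k => (hbase k).2, mul_one, hα.2]

lemma one_sided {Nx Ny Kx Ky : ℕ} (hNx : 0 < Nx) (hNy : 0 < Ny)
    (C : Fin Nx → Fin Ny → ℝ) (hC : ∀ i j, 0 ≤ C i j)
    (μbase : Fin Kx → Fin Nx → ℝ) (νbase : Fin Ky → Fin Ny → ℝ)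
    (hμbase : ∀ k, (∀ i, 0 ≤ μbase k i) ∧ ∑ i, μbase k i = 1)
    (hνbase : ∀ l, (∀ j, 0 ≤ νbase l j) ∧ ∑ j, νbase l j = 1)
    (αx α'x : Fin Kx → ℝ) (αy α'y : Fin Ky → ℝ)
    (hαx : (∀ k, 0 ≤ αx k) ∧ ∑ k, αx k = 1)
    (hαy : (∀ l, 0 ≤ αy l) ∧ ∑ l, αy l = 1)
    (hα'x : (∀ k, 0 ≤ α'x k) ∧ ∑ k, α'x k = 1)
    (hα'y : (∀ l, 0 ≤ α'y l) ∧ ∑ l, α'y l = 1)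
    (hattained : ∃ φ : Fin Nx → ℝ, ∃ ψ : Fin Ny → ℝ,
      (∀ i j, φ i + ψ j ≤ C i j) ∧
      (∑ i, φ i * (∑ k, αx k * μbase k i)) + (∑ j, ψ j * (∑ l, αy l * νbase l j))
        = dualValue C (fun i => ∑ k, αx k * μbase k i) (fun j => ∑ l, αy l * νbase l j)) :
    dualValue C (fun i => ∑ k, αx k * μbase k i) (fun j => ∑ l, αy l * νbase l j)
      - dualValue C (fun i => ∑ k, α'x k * μbase k i) (fun j => ∑ l, α'y l * νbase l j)
    ≤ (⨆ i, ⨆ j, |C i j|) * (((Kx : ℝ) + (Ky : ℝ))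
        * max (⨆ k, |αx k - α'x k|) (⨆ l, |αy l - α'y l|)) := by
  set M := ⨆ i, ⨆ j, |C i j| with hM
  set ε := max (⨆ k, |αx k - α'x k|) (⨆ l, |αy l - α'y l|) with hε
  have hεx : ∀ k, |αx k - α'x k| ≤ ε := fun k =>
    le_trans (le_ciSup (bddR fun k => |αx k - α'x k|) k) (le_max_left _ _)
  have hεy : ∀ l, |αy l - α'y l| ≤ ε := fun l =>
    le_trans (le_ciSup (bddR fun l => |αy l - α'y l|) l) (le_max_right _ _)
  obtain ⟨hμα, hμαs⟩ := mix_nonneg μbase αx hμbase hαx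
  obtain ⟨hνα, hναs⟩ := mix_nonneg νbase αy hνbase hαy
  obtain ⟨hμα', hμαs'⟩ := mix_nonneg μbase α'x hμbase hα'x
  obtain ⟨hνα', hναs'⟩ := mix_nonneg νbase α'y hνbase hα'y
  obtain ⟨φ0, ψ0, hadm0, hval0⟩ := hattained
  obtain ⟨φ, ψ, hadm, hφbd, hψbd, hge⟩ :=
    exists_bounded_pair hNx hNy C hC _ _ hμα hμαs hνα hναs φ0 ψ0 hadm0
  -- (φ, ψ) attains the dual value for α
  have hvala : (∑ i, φ i * (∑ k, αx k * μbase k i)) + (∑ j, ψ j * (∑ l, αy l * νbase l j))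
      = dualValue C (fun i => ∑ k, αx k * μbase k i) (fun j => ∑ l, αy l * νbase l j) := by
    refine le_antisymm (val_le_dual C hC _ _ hμα hμαs hνα hναs φ ψ hadm) ?_
    rw [← hval0]; exact hge
  have h1 : (∑ i, φ i * (∑ k, α'x k * μbase k i)) + (∑ j, ψ j * (∑ l, α'y l * νbase l j))
      ≤ dualValue C (fun i => ∑ k, α'x k * μbase k i) (fun j => ∑ l, α'y l * νbase l j) :=
    val_le_dual C hC _ _ hμα' hμαs' hνα' hναs' φ ψ hadm
  have hMε : ∀ (K N : ℕ) (base : Fin K → Fin N → ℝ)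
      (hbase : ∀ k, (∀ i, 0 ≤ base k i) ∧ ∑ i, base k i = 1)
      (f : Fin N → ℝ) (hf : ∀ i, |f i| ≤ M), ∀ k, |∑ i, f i * base k i| ≤ M := by
    intro K N base hbase f hf k
    calc |∑ i, f i * base k i| ≤ ∑ i, |f i * base k i| := Finset.abs_sum_le_sum_abs _ _
      _ ≤ ∑ i, M * base k i := Finset.sum_le_sum fun i _ => by
          rw [abs_mul, abs_of_nonneg ((hbase k).1 i)]
          exact mul_le_mul_of_nonneg_right (hf i) ((hbase k).1 i)
      _ = M := by rw [← Finset.mul_sum, (hbase k).2, mul_one]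
  have hDx : (∑ i, φ i * (∑ k, αx k * μbase k i)) - (∑ i, φ i * (∑ k, α'x k * μbase k i))
      ≤ (Kx : ℝ) * (M * ε) := by
    have heq : (∑ i, φ i * (∑ k, αx k * μbase k i)) - (∑ i, φ i * (∑ k, α'x k * μbase k i))
        = ∑ k, (αx k - α'x k) * (∑ i, φ i * μbase k i) := by
      rw [← Finset.sum_sub_distrib]
      calc ∑ i, (φ i * (∑ k, αx k * μbase k i) - φ i * (∑ k, α'x k * μbase k i))
          = ∑ i, ∑ k, (αx k - α'x k) * (φ i * μbase k i) := by
            refine Finset.sum_congr rfl fun i _ => ?_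
            rw [Finset.mul_sum, Finset.mul_sum, ← Finset.sum_sub_distrib]
            exact Finset.sum_congr rfl fun k _ => by ring
        _ = ∑ k, (αx k - α'x k) * (∑ i, φ i * μbase k i) := by
            rw [Finset.sum_comm]
            exact Finset.sum_congr rfl fun k _ => by rw [Finset.mul_sum]
    rw [heq]
    calc ∑ k, (αx k - α'x k) * (∑ i, φ i * μbase k i)
        ≤ ∑ k, |(αx k - α'x k) * (∑ i, φ i * μbase k i)| :=
          Finset.sum_le_sum fun k _ => le_abs_self _
      _ ≤ ∑ _k : Fin Kx, ε * M := Finset.sum_le_sum fun k _ => by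
          rw [abs_mul]
          exact mul_le_mul (hεx k) (hMε Kx Nx μbase hμbase φ hφbd k) (abs_nonneg _)
            (le_trans (abs_nonneg (αx k - α'x k)) (hεx k))
      _ = (Kx : ℝ) * (M * ε) := by rw [Finset.sum_const]; simp [mul_comm, Finset.card_univ]
  have hDy : (∑ j, ψ j * (∑ l, αy l * νbase l j)) - (∑ j, ψ j * (∑ l, α'y l * νbase l j))
      ≤ (Ky : ℝ) * (M * ε) := by
    have heq : (∑ j, ψ j * (∑ l, αy l * νbase l j)) - (∑ j, ψ j * (∑ l, α'y l * νbase l j))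
        = ∑ l, (αy l - α'y l) * (∑ j, ψ j * νbase l j) := by
      rw [← Finset.sum_sub_distrib]
      calc ∑ j, (ψ j * (∑ l, αy l * νbase l j) - ψ j * (∑ l, α'y l * νbase l j))
          = ∑ j, ∑ l, (αy l - α'y l) * (ψ j * νbase l j) := by
            refine Finset.sum_congr rfl fun j _ => ?_
            rw [Finset.mul_sum, Finset.mul_sum, ← Finset.sum_sub_distrib]
            exact Finset.sum_congr rfl fun l _ => by ring
        _ = ∑ l, (αy l - α'y l) * (∑ j, ψ j * νbase l j) := by
            rw [Finset.sum_comm]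
            exact Finset.sum_congr rfl fun l _ => by rw [Finset.mul_sum]
    rw [heq]
    calc ∑ l, (αy l - α'y l) * (∑ j, ψ j * νbase l j)
        ≤ ∑ l, |(αy l - α'y l) * (∑ j, ψ j * νbase l j)| :=
          Finset.sum_le_sum fun l _ => le_abs_self _
      _ ≤ ∑ _l : Fin Ky, ε * M := Finset.sum_le_sum fun l _ => by
          rw [abs_mul]
          exact mul_le_mul (hεy l) (hMε Ky Ny νbase hνbase ψ hψbd l) (abs_nonneg _)
            (le_trans (abs_nonneg (αy l - α'y l)) (hεy l))
      _ = (Ky : ℝ) * (M * ε) := by rw [Finset.sum_const]; simp [mul_comm, Finset.card_univ]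
  have := h1
  rw [← hvala]
  nlinarith [hDx, hDy]

theorem stmt4 {Nx Ny Kx Ky : ℕ} (hNx : 0 < Nx) (hNy : 0 < Ny)
    (hKx : 0 < Kx) (hKy : 0 < Ky)
    (C : Fin Nx → Fin Ny → ℝ) (hC : ∀ i j, 0 ≤ C i j)
    (μbase : Fin Kx → Fin Nx → ℝ) (νbase : Fin Ky → Fin Ny → ℝ)
    (hμbase : ∀ k, (∀ i, 0 ≤ μbase k i) ∧ ∑ i, μbase k i = 1)
    (hνbase : ∀ l, (∀ j, 0 ≤ νbase l j) ∧ ∑ j, νbase l j = 1)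
    (αx α'x : Fin Kx → ℝ) (αy α'y : Fin Ky → ℝ)
    (hαx : (∀ k, 0 ≤ αx k) ∧ ∑ k, αx k = 1)
    (hαy : (∀ l, 0 ≤ αy l) ∧ ∑ l, αy l = 1)
    (hα'x : (∀ k, 0 ≤ α'x k) ∧ ∑ k, α'x k = 1)
    (hα'y : (∀ l, 0 ≤ α'y l) ∧ ∑ l, α'y l = 1)
    (hattained : ∃ φ : Fin Nx → ℝ, ∃ ψ : Fin Ny → ℝ,
      (∀ i j, φ i + ψ j ≤ C i j) ∧
      (∑ i, φ i * (∑ k, αx k * μbase k i)) + (∑ j, ψ j * (∑ l, αy l * νbase l j))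
        = dualValue C (fun i => ∑ k, αx k * μbase k i) (fun j => ∑ l, αy l * νbase l j))
    (hattained' : ∃ φ : Fin Nx → ℝ, ∃ ψ : Fin Ny → ℝ,
      (∀ i j, φ i + ψ j ≤ C i j) ∧
      (∑ i, φ i * (∑ k, α'x k * μbase k i)) + (∑ j, ψ j * (∑ l, α'y l * νbase l j))
        = dualValue C (fun i => ∑ k, α'x k * μbase k i) (fun j => ∑ l, α'y l * νbase l j)) :
    |dualValue C (fun i => ∑ k, αx k * μbase k i) (fun j => ∑ l, αy l * νbase l j)
      - dualValue C (fun i => ∑ k, α'x k * μbase k i) (fun j => ∑ l, α'y l * νbase l j)|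
    ≤ (⨆ i, ⨆ j, |C i j|) * (2 * max (Kx : ℝ) (Ky : ℝ) + 3 * min (Kx : ℝ) (Ky : ℝ))
        * max (⨆ k, |αx k - α'x k|) (⨆ l, |αy l - α'y l|) := by
  set M := ⨆ i, ⨆ j, |C i j| with hM
  set ε := max (⨆ k, |αx k - α'x k|) (⨆ l, |αy l - α'y l|) with hε
  have h1 := one_sided hNx hNy C hC μbase νbase hμbase hνbase αx α'x αy α'y
    hαx hαy hα'x hα'y hattained
  have h2 := one_sided hNx hNy C hC μbase νbase hμbase hνbase α'x αx α'y αy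
    hα'x hα'y hαx hαy hattained'
  have hsym : max (⨆ k, |α'x k - αx k|) (⨆ l, |α'y l - αy l|) = ε := by
    rw [hε]
    congr 1 <;> exact iSup_congr fun _ => by rw [abs_sub_comm]
  rw [hsym] at h2
  have hM0 : 0 ≤ M := le_trans (abs_nonneg _) (le_M C ⟨0, hNx⟩ ⟨0, hNy⟩)
  have hε0 : 0 ≤ ε := le_trans (abs_nonneg (αx ⟨0, hKx⟩ - α'x ⟨0, hKx⟩))
    (le_trans (le_ciSup (bddR fun k => |αx k - α'x k|) ⟨0, hKx⟩) (le_max_left _ _))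
  have habs : |dualValue C (fun i => ∑ k, αx k * μbase k i) (fun j => ∑ l, αy l * νbase l j)
      - dualValue C (fun i => ∑ k, α'x k * μbase k i) (fun j => ∑ l, α'y l * νbase l j)|
      ≤ M * (((Kx : ℝ) + (Ky : ℝ)) * ε) := abs_sub_le_iff.mpr ⟨h1, by linarith⟩
  refine le_trans habs ?_
  have hmm : max (Kx : ℝ) (Ky : ℝ) + min (Kx : ℝ) (Ky : ℝ) = (Kx : ℝ) + (Ky : ℝ) :=
    max_add_min _ _
  have hmin0 : (0 : ℝ) ≤ min (Kx : ℝ) (Ky : ℝ) :=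
    le_min (Nat.cast_nonneg _) (Nat.cast_nonneg _)
  have hmax0 : (0 : ℝ) ≤ max (Kx : ℝ) (Ky : ℝ) :=
    le_max_of_le_left (Nat.cast_nonneg _)
  nlinarith [mul_nonneg hM0 hε0, mul_le_mul_of_nonneg_left
    (mul_le_mul_of_nonneg_right (by linarith :
      (Kx : ℝ) + (Ky : ℝ) ≤ 2 * max (Kx : ℝ) (Ky : ℝ) + 3 * min (Kx : ℝ) (Ky : ℝ)) hε0) hM0]
end

section
/- Let 𝒲₊ ⊆ ℝ^{Nx×Ny} be the cone of nonnegative linear combinations of finitely many fixed matrices w_1,…,w_R with nonnegative entries. Suppose that for every 1 ≤ k ≤ Kx and 1 ≤ l ≤ Ky there exists a matrix Π_{k,l} ∈ 𝒲₊ that is a coupling of (μ_k, ν_l). Then for every α ∈ 𝒜 there exists Π ∈ 𝒲₊ that is a coupling of (μ(α), ν(α)); in particular the feasible set of the reduced problem at α is nonempty. -/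
open scoped BigOperators

/-- `P` is a coupling of `(μ, ν)`: nonnegative entries, row sums `μ`, column sums `ν`. -/
def IsCoupling {Nx Ny : ℕ} (P : Fin Nx → Fin Ny → ℝ)
    (μ : Fin Nx → ℝ) (ν : Fin Ny → ℝ) : Prop :=
  (∀ i j, 0 ≤ P i j) ∧ (∀ i, ∑ j, P i j = μ i) ∧ (∀ j, ∑ i, P i j = ν j)

lemma sum_swap4 {A B C D : Type*} [Fintype A] [Fintype B] [Fintype C] [Fintype D]
    (f : A → B → C → D → ℝ) :
    ∑ a, ∑ b, ∑ c, ∑ d, f a b c d = ∑ c, ∑ d, ∑ a, ∑ b, f a b c d := by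
  have h1 : ∑ a, ∑ b, ∑ c, ∑ d, f a b c d
      = ∑ p : A × B, ∑ q : C × D, f p.1 p.2 q.1 q.2 := by
    rw [Fintype.sum_prod_type]
    exact Finset.sum_congr rfl fun a _ => Finset.sum_congr rfl fun b _ => by
      rw [Fintype.sum_prod_type]
  have h2 : ∑ c, ∑ d, ∑ a, ∑ b, f a b c d
      = ∑ q : C × D, ∑ p : A × B, f p.1 p.2 q.1 q.2 := by
    rw [Fintype.sum_prod_type]
    exact Finset.sum_congr rfl fun c _ => Finset.sum_congr rfl fun d _ => by
      rw [Fintype.sum_prod_type]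
  rw [h1, h2, Finset.sum_comm]

theorem stmt8 {Nx Ny Kx Ky R : ℕ} (hNx : 0 < Nx) (hNy : 0 < Ny)
    (hKx : 0 < Kx) (hKy : 0 < Ky) (hR : 0 < R)
    (μbase : Fin Kx → Fin Nx → ℝ) (νbase : Fin Ky → Fin Ny → ℝ)
    (hμbase : ∀ k, (∀ i, 0 ≤ μbase k i) ∧ ∑ i, μbase k i = 1)
    (hνbase : ∀ l, (∀ j, 0 ≤ νbase l j) ∧ ∑ j, νbase l j = 1)
    (w : Fin R → Fin Nx → Fin Ny → ℝ)
    (hw : ∀ r i j, 0 ≤ w r i j)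
    (hfeas : ∀ k : Fin Kx, ∀ l : Fin Ky, ∃ c : Fin R → ℝ, (∀ r, 0 ≤ c r) ∧
      IsCoupling (fun i j => ∑ r, c r * w r i j) (μbase k) (νbase l))
    (αx : Fin Kx → ℝ) (αy : Fin Ky → ℝ)
    (hαx : (∀ k, 0 ≤ αx k) ∧ ∑ k, αx k = 1)
    (hαy : (∀ l, 0 ≤ αy l) ∧ ∑ l, αy l = 1) :
    ∃ c : Fin R → ℝ, (∀ r, 0 ≤ c r) ∧
      IsCoupling (fun i j => ∑ r, c r * w r i j)
        (fun i => ∑ k, αx k * μbase k i) (fun j => ∑ l, αy l * νbase l j) := by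
  choose C hC0 hC using hfeas
  refine ⟨fun r => ∑ k, ∑ l, αx k * αy l * C k l r, ?_, ?_, ?_, ?_⟩
  · intro r
    refine Finset.sum_nonneg fun k _ => Finset.sum_nonneg fun l _ => ?_
    exact mul_nonneg (mul_nonneg (hαx.1 k) (hαy.1 l)) (hC0 k l r)
  · intro i j
    refine Finset.sum_nonneg fun r _ => mul_nonneg ?_ (hw r i j)
    refine Finset.sum_nonneg fun k _ => Finset.sum_nonneg fun l _ => ?_
    exact mul_nonneg (mul_nonneg (hαx.1 k) (hαy.1 l)) (hC0 k l r)
  · intro i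
    calc ∑ j, ∑ r, (∑ k, ∑ l, αx k * αy l * C k l r) * w r i j
        = ∑ j, ∑ r, ∑ k, ∑ l, αx k * αy l * C k l r * w r i j := by
          simp only [Finset.sum_mul]
      _ = ∑ k, ∑ l, ∑ j, ∑ r, αx k * αy l * C k l r * w r i j :=
          sum_swap4 fun j r k l => αx k * αy l * C k l r * w r i j
      _ = ∑ k, ∑ l, αx k * αy l * ∑ j, ∑ r, C k l r * w r i j := by
          simp only [Finset.mul_sum, mul_assoc]
      _ = ∑ k, ∑ l, αx k * αy l * μbase k i := by
          refine Finset.sum_congr rfl fun k _ => Finset.sum_congr rfl fun l _ => ?_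
          rw [(hC k l).2.1 i]
      _ = ∑ k, αx k * μbase k i := by
          refine Finset.sum_congr rfl fun k _ => ?_
          simp only [mul_assoc, ← Finset.sum_mul, ← Finset.mul_sum, hαy.2, mul_one, one_mul]
  · intro j
    calc ∑ i, ∑ r, (∑ k, ∑ l, αx k * αy l * C k l r) * w r i j
        = ∑ i, ∑ r, ∑ k, ∑ l, αx k * αy l * C k l r * w r i j := by
          simp only [Finset.sum_mul]
      _ = ∑ k, ∑ l, ∑ i, ∑ r, αx k * αy l * C k l r * w r i j :=
          sum_swap4 fun i r k l => αx k * αy l * C k l r * w r i j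
      _ = ∑ k, ∑ l, αx k * αy l * ∑ i, ∑ r, C k l r * w r i j := by
          simp only [Finset.mul_sum, mul_assoc]
      _ = ∑ k, ∑ l, αx k * αy l * νbase l j := by
          refine Finset.sum_congr rfl fun k _ => Finset.sum_congr rfl fun l _ => ?_
          rw [(hC k l).2.2 j]
      _ = ∑ l, αy l * νbase l j := by
          rw [Finset.sum_comm]
          refine Finset.sum_congr rfl fun l _ => ?_
          have : ∀ k, αx k * αy l * νbase l j = αx k * (αy l * νbase l j) := fun k => by ring
          simp only [this, ← Finset.sum_mul, hαx.2, one_mul]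
end

section
/- Let 𝒲₊ ⊆ ℝ^{Nx×Ny} be the cone of nonnegative linear combinations of finitely many fixed matrices w_1,…,w_R with nonnegative entries, let Û ∈ ℝ^{Nx×N} and V̂ ∈ ℝ^{Ny×M} be matrices, and let μ ∈ ℝ^{Nx}, ν ∈ ℝ^{Ny} be probability vectors. If the all-ones vector 𝟙_{Nx} is one of the columns of Û, or the all-ones vector 𝟙_{Ny} is one of the columns of V̂, then the feasible set F := {Π ∈ 𝒲₊ : Ûᵀ(Π·𝟙_{Ny}) = Ûᵀμ and V̂ᵀ(Πᵀ·𝟙_{Nx}) = V̂ᵀν} is a compact subset of ℝ^{Nx×Ny}. -/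
/-!
A column of ones in `U` (or `V`) turns one marginal constraint into `∑ᵢⱼ Πᵢⱼ = 1`. A nonzero
generator `w r` has positive entry sum, so in a nonnegative combination of total mass at most `1`
its coefficient is at most the reciprocal of that sum. Hence the feasible set is the image of a
compact box of coefficients, cut down by closed linear constraints.
-/

open scoped BigOperators

section NonnegCombination

variable {ι E : Type*} [Fintype ι] [AddCommGroup E] [Module ℝ E] [TopologicalSpace E]
  [ContinuousAdd E] [ContinuousSMul ℝ E]

/- The coefficients range over the box `∏ [0, (φ (w r))⁻¹]`: a generator of mass zero is `0`, so
its coefficient can be taken to be `0 = 0⁻¹`. -/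
theorem isCompact_nonneg_combinations_of_le_one (w : ι → E) (φ : E →ₗ[ℝ] ℝ)
    (hφ : ∀ r, 0 ≤ φ (w r)) (hφ_eq_zero : ∀ r, φ (w r) = 0 → w r = 0) :
    IsCompact {x : E | (∃ c : ι → ℝ, (∀ r, 0 ≤ c r) ∧ x = ∑ r, c r • w r) ∧ φ x ≤ 1} := by
  set box : Set (ι → ℝ) := Set.univ.pi fun r => Set.Icc 0 (φ (w r))⁻¹
  set total : (ι → ℝ) → ℝ := fun c => ∑ r, c r * φ (w r)
  have hφ_sum : ∀ c : ι → ℝ, φ (∑ r, c r • w r) = total c := by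
    intro c
    simp [total, map_sum, map_smul, smul_eq_mul]
  have hcoeff : IsCompact (box ∩ {c | total c ≤ 1}) :=
    (isCompact_univ_pi fun r => isCompact_Icc).inter_right
      (isClosed_le (by fun_prop) continuous_const)
  convert hcoeff.image (f := fun c => ∑ r, c r • w r) (by fun_prop) using 1
  ext x
  constructor
  · rintro ⟨⟨c, hc, rfl⟩, hx⟩
    set c' : ι → ℝ := fun r => if φ (w r) = 0 then 0 else c r
    have hc' : ∀ r, 0 ≤ c' r := fun r => by unfold c'; split_ifs <;> simp [hc r]
    have hsum : ∑ r, c' r • w r = ∑ r, c r • w r :=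
      Finset.sum_congr rfl fun r _ => by
        unfold c'; split_ifs with h
        · simp [hφ_eq_zero r h]
        · rfl
    have htotal : total c' ≤ 1 := by rw [← hφ_sum, hsum]; exact hx
    refine ⟨c', ⟨fun r _ => ⟨hc' r, ?_⟩, htotal⟩, hsum⟩
    rcases (hφ r).eq_or_lt with h | h
    · simp [c', ← h]
    · rw [← one_div, le_div_iff₀ h]
      exact (Finset.single_le_sum (fun s _ => mul_nonneg (hc' s) (hφ s))
        (Finset.mem_univ r)).trans htotal
  · rintro ⟨c, ⟨hbox, htotal⟩, rfl⟩
    exact ⟨⟨c, fun r => (hbox r trivial).1, rfl⟩, (hφ_sum c).trans_le htotal⟩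

end NonnegCombination

namespace Matrix

variable {m n : Type*} [Fintype m] [Fintype n]

def entrySum : Matrix m n ℝ →ₗ[ℝ] ℝ where
  toFun P := ∑ i, ∑ j, P i j
  map_add' P Q := by simp only [add_apply, Finset.sum_add_distrib]
  map_smul' a P := by simp only [smul_apply, smul_eq_mul, Finset.mul_sum, RingHom.id_apply]

theorem entrySum_apply (P : Matrix m n ℝ) : entrySum P = ∑ i, ∑ j, P i j := rfl

theorem entrySum_nonneg {P : Matrix m n ℝ} (hP : ∀ i j, 0 ≤ P i j) : 0 ≤ entrySum P :=
  Finset.sum_nonneg fun i _ => Finset.sum_nonneg fun j _ => hP i j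

theorem eq_zero_of_entrySum_eq_zero {P : Matrix m n ℝ} (hP : ∀ i j, 0 ≤ P i j)
    (h : entrySum P = 0) : P = 0 := by
  ext i j
  rw [entrySum_apply, Finset.sum_eq_zero_iff_of_nonneg fun i _ =>
    Finset.sum_nonneg fun j _ => hP i j] at h
  exact (Finset.sum_eq_zero_iff_of_nonneg fun j _ => hP i j).1 (h i (Finset.mem_univ i)) j
    (Finset.mem_univ j)

theorem entrySum_eq_one_of_marginal_constraints {N M : Type*} [Fintype N] [Fintype M]
    {P : Matrix m n ℝ} {U : Matrix m N ℝ} {V : Matrix n M ℝ} {μ : m → ℝ} {ν : n → ℝ}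
    (hμ : ∑ i, μ i = 1) (hν : ∑ j, ν j = 1)
    (hones : (∃ k, ∀ i, U i k = 1) ∨ (∃ l, ∀ j, V j l = 1))
    (hU : ∀ k, ∑ i, U i k * (∑ j, P i j) = ∑ i, U i k * μ i)
    (hV : ∀ l, ∑ j, V j l * (∑ i, P i j) = ∑ j, V j l * ν j) :
    entrySum P = 1 := by
  rcases hones with ⟨k, hk⟩ | ⟨l, hl⟩
  · simpa [hk, hμ, entrySum_apply] using hU k
  · simpa [hl, hν, Finset.sum_comm (f := fun i j => P i j), entrySum_apply] using hV l

end Matrix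

theorem stmt9_general {Nx Ny N M R : ℕ}
    (w : Fin R → Matrix (Fin Nx) (Fin Ny) ℝ)
    (hw : ∀ r i j, 0 ≤ w r i j)
    (U : Matrix (Fin Nx) (Fin N) ℝ) (V : Matrix (Fin Ny) (Fin M) ℝ)
    (μ : Fin Nx → ℝ) (ν : Fin Ny → ℝ)
    (hμ : (∀ i, 0 ≤ μ i) ∧ ∑ i, μ i = 1)
    (hν : (∀ j, 0 ≤ ν j) ∧ ∑ j, ν j = 1)
    (hones : (∃ n : Fin N, ∀ i, U i n = 1) ∨ (∃ m : Fin M, ∀ j, V j m = 1)) :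
    IsCompact {P : Matrix (Fin Nx) (Fin Ny) ℝ |
      (∃ c : Fin R → ℝ, (∀ r, 0 ≤ c r) ∧ P = ∑ r, c r • w r)
      ∧ (∀ n : Fin N, ∑ i, U i n * (∑ j, P i j) = ∑ i, U i n * μ i)
      ∧ (∀ m : Fin M, ∑ j, V j m * (∑ i, P i j) = ∑ j, V j m * ν j)} := by
  have hcone := isCompact_nonneg_combinations_of_le_one w Matrix.entrySum
    (fun r => Matrix.entrySum_nonneg (hw r)) (fun r => Matrix.eq_zero_of_entrySum_eq_zero (hw r))
  have hconstraints : IsClosed {P : Matrix (Fin Nx) (Fin Ny) ℝ |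
      (∀ n : Fin N, ∑ i, U i n * (∑ j, P i j) = ∑ i, U i n * μ i)
      ∧ (∀ m : Fin M, ∑ j, V j m * (∑ i, P i j) = ∑ j, V j m * ν j)} := by
    simp only [Set.ofPred_and, Set.ofPred_forall]
    exact (isClosed_iInter fun n => isClosed_eq (by fun_prop) continuous_const).inter
      (isClosed_iInter fun m => isClosed_eq (by fun_prop) continuous_const)
  convert hcone.inter_right hconstraints using 1
  ext P
  constructor
  · rintro ⟨hP, hU, hV⟩
    exact ⟨⟨hP, (Matrix.entrySum_eq_one_of_marginal_constraints hμ.2 hν.2 hones hU hV).le⟩,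
      hU, hV⟩
  · rintro ⟨⟨hP, -⟩, hU, hV⟩
    exact ⟨hP, hU, hV⟩

theorem stmt9 {Nx Ny N M R : ℕ} (hNx : 0 < Nx) (hNy : 0 < Ny)
    (hN : 0 < N) (hM : 0 < M) (hR : 0 < R)
    (w : Fin R → Matrix (Fin Nx) (Fin Ny) ℝ)
    (hw : ∀ r i j, 0 ≤ w r i j)
    (U : Matrix (Fin Nx) (Fin N) ℝ) (V : Matrix (Fin Ny) (Fin M) ℝ)
    (μ : Fin Nx → ℝ) (ν : Fin Ny → ℝ)
    (hμ : (∀ i, 0 ≤ μ i) ∧ ∑ i, μ i = 1)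
    (hν : (∀ j, 0 ≤ ν j) ∧ ∑ j, ν j = 1)
    (hones : (∃ n : Fin N, ∀ i, U i n = 1) ∨ (∃ m : Fin M, ∀ j, V j m = 1)) :
    IsCompact {P : Matrix (Fin Nx) (Fin Ny) ℝ |
      (∃ c : Fin R → ℝ, (∀ r, 0 ≤ c r) ∧ P = ∑ r, c r • w r)
      ∧ (∀ n : Fin N, ∑ i, U i n * (∑ j, P i j) = ∑ i, U i n * μ i)
      ∧ (∀ m : Fin M, ∑ j, V j m * (∑ i, P i j) = ∑ j, V j m * ν j)} :=
  stmt9_general w hw U V μ ν hμ hν hones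
end

section
/- Let G ∈ ℝ^{Nx×R}, H ∈ ℝ^{Ny×R}, Û ∈ ℝ^{Nx×N}, V̂ ∈ ℝ^{Ny×M} be matrices and m ∈ ℝ^{Nx}, n ∈ ℝ^{Ny} be vectors. Assume: (a) there exists s ∈ ℝ_+^R with G·s = m and H·s = n; (b) rank(Ûᵀ·G) = rank(G); and (c) rank(V̂ᵀ·H) = rank(H). Then {p ∈ ℝ_+^R : Ûᵀ·G·p = Ûᵀ·m and V̂ᵀ·H·p = V̂ᵀ·n} = {p ∈ ℝ_+^R : G·p = m and H·p = n}. Consequently, for any cost vector ĉ ∈ ℝ^R, the infima of ⟨p, ĉ⟩ over these two sets are equal. -/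
open scoped BigOperators

lemma aux_ker_eq {a b R : ℕ} (A : Matrix (Fin a) (Fin R) ℝ)
    (B : Matrix (Fin b) (Fin a) ℝ) (h : (B * A).rank = A.rank)
    (x : Fin R → ℝ) (hx : (B * A).mulVec x = 0) : A.mulVec x = 0 := by
  have hle : LinearMap.ker A.mulVecLin ≤ LinearMap.ker (B * A).mulVecLin := by
    intro y hy
    simp only [LinearMap.mem_ker, Matrix.mulVecLin_apply] at hy ⊢
    rw [← Matrix.mulVec_mulVec, hy, Matrix.mulVec_zero]
  have h1 := LinearMap.finrank_range_add_finrank_ker A.mulVecLin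
  have h2 := LinearMap.finrank_range_add_finrank_ker (B * A).mulVecLin
  have hrk : Module.finrank ℝ (LinearMap.ker A.mulVecLin)
      = Module.finrank ℝ (LinearMap.ker (B * A).mulVecLin) := by
    have : Matrix.rank (B * A) = Module.finrank ℝ (LinearMap.range (B * A).mulVecLin) := rfl
    have : Matrix.rank A = Module.finrank ℝ (LinearMap.range A.mulVecLin) := rfl
    unfold Matrix.rank at h
    omega
  have hker : LinearMap.ker A.mulVecLin = LinearMap.ker (B * A).mulVecLin :=
    Submodule.eq_of_le_of_finrank_eq hle hrk
  have : x ∈ LinearMap.ker A.mulVecLin := by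
    rw [hker]; simpa [Matrix.mulVecLin_apply] using hx
  simpa [Matrix.mulVecLin_apply] using this

theorem stmt14 {Nx Ny N M R : ℕ} (hNx : 0 < Nx) (hNy : 0 < Ny)
    (hN : 0 < N) (hM : 0 < M) (hR : 0 < R)
    (G : Matrix (Fin Nx) (Fin R) ℝ) (H : Matrix (Fin Ny) (Fin R) ℝ)
    (U : Matrix (Fin Nx) (Fin N) ℝ) (V : Matrix (Fin Ny) (Fin M) ℝ)
    (m : Fin Nx → ℝ) (n : Fin Ny → ℝ)
    (hfeas : ∃ s : Fin R → ℝ, (∀ r, 0 ≤ s r) ∧ G.mulVec s = m ∧ H.mulVec s = n)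
    (hrankG : (U.transpose * G).rank = G.rank)
    (hrankH : (V.transpose * H).rank = H.rank) :
    letI S1 : Set (Fin R → ℝ) := {p | (∀ r, 0 ≤ p r)
      ∧ (U.transpose * G).mulVec p = U.transpose.mulVec m
      ∧ (V.transpose * H).mulVec p = V.transpose.mulVec n}
    letI S2 : Set (Fin R → ℝ) := {p | (∀ r, 0 ≤ p r)
      ∧ G.mulVec p = m ∧ H.mulVec p = n}
    S1 = S2 ∧ ∀ c : Fin R → ℝ,
      sInf {v : ℝ | ∃ p ∈ S1, v = ∑ r, p r * c r}
        = sInf {v : ℝ | ∃ p ∈ S2, v = ∑ r, p r * c r} := by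
  obtain ⟨s, hs0, hGs, hHs⟩ := hfeas
  have hset : {p : Fin R → ℝ | (∀ r, 0 ≤ p r)
      ∧ (U.transpose * G).mulVec p = U.transpose.mulVec m
      ∧ (V.transpose * H).mulVec p = V.transpose.mulVec n}
      = {p | (∀ r, 0 ≤ p r) ∧ G.mulVec p = m ∧ H.mulVec p = n} := by
    ext p
    simp only [Set.mem_setOf_eq]
    constructor
    · rintro ⟨hp0, hpG, hpH⟩
      refine ⟨hp0, ?_, ?_⟩
      · have hz : (U.transpose * G).mulVec (p - s) = 0 := by
          rw [Matrix.mulVec_sub, hpG, ← hGs, ← Matrix.mulVec_mulVec, sub_self]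
        have := aux_ker_eq G U.transpose hrankG (p - s) hz
        rw [Matrix.mulVec_sub, sub_eq_zero] at this
        rw [this, hGs]
      · have hz : (V.transpose * H).mulVec (p - s) = 0 := by
          rw [Matrix.mulVec_sub, hpH, ← hHs, ← Matrix.mulVec_mulVec, sub_self]
        have := aux_ker_eq H V.transpose hrankH (p - s) hz
        rw [Matrix.mulVec_sub, sub_eq_zero] at this
        rw [this, hHs]
    · rintro ⟨hp0, hpG, hpH⟩
      exact ⟨hp0, by rw [← Matrix.mulVec_mulVec, hpG],
        by rw [← Matrix.mulVec_mulVec, hpH]⟩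
  exact ⟨hset, fun c => by rw [hset]⟩
end

section
/- Let α, α' ∈ 𝒜 and suppose that for both parameters the dual optimal values J(α) and J(α') are attained by dual-admissible pairs. Then for every real number r, |J(α) − r| ≤ |J(α') − r| + ‖C‖_∞ · (2·max(Kx, Ky) + 3·min(Kx, Ky)) · ‖α − α'‖_∞. -/
open scoped BigOperators

open scoped BigOperators

section Aux

variable {Nx Ny : ℕ}

/-- Any admissible value is at most `M` when `C ≤ M` pointwise. -/
lemma dv_mem_le (C : Fin Nx → Fin Ny → ℝ) (M : ℝ) (hM : ∀ i j, C i j ≤ M)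
    (μ : Fin Nx → ℝ) (ν : Fin Ny → ℝ)
    (hμ0 : ∀ i, 0 ≤ μ i) (hμ1 : ∑ i, μ i = 1)
    (hν0 : ∀ j, 0 ≤ ν j) (hν1 : ∑ j, ν j = 1)
    (φ : Fin Nx → ℝ) (ψ : Fin Ny → ℝ) (hadm : ∀ i j, φ i + ψ j ≤ C i j) :
    (∑ i, φ i * μ i) + (∑ j, ψ j * ν j) ≤ M := by
  have h1 : ∑ i, φ i * μ i = ∑ i, ∑ j, (μ i * ν j) * φ i := by
    refine Finset.sum_congr rfl fun i _ => ?_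
    calc φ i * μ i = (μ i * φ i) * ∑ j, ν j := by rw [hν1]; ring
    _ = ∑ j, (μ i * ν j) * φ i := by
        rw [Finset.mul_sum]; exact Finset.sum_congr rfl fun j _ => by ring
  have h2 : ∑ j, ψ j * ν j = ∑ i, ∑ j, (μ i * ν j) * ψ j := by
    rw [Finset.sum_comm]
    refine Finset.sum_congr rfl fun j _ => ?_
    calc ψ j * ν j = (ν j * ψ j) * ∑ i, μ i := by rw [hμ1]; ring
    _ = ∑ i, (μ i * ν j) * ψ j := by
        rw [Finset.mul_sum]; exact Finset.sum_congr rfl fun i _ => by ring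
  have key : (∑ i, φ i * μ i) + (∑ j, ψ j * ν j)
      = ∑ i, ∑ j, (μ i * ν j) * (φ i + ψ j) := by
    rw [h1, h2, ← Finset.sum_add_distrib]
    refine Finset.sum_congr rfl fun i _ => ?_
    rw [← Finset.sum_add_distrib]
    exact Finset.sum_congr rfl fun j _ => by ring
  rw [key]
  have hfin : ∑ i, ∑ j, (μ i * ν j) * M = M := by
    have : ∀ i, ∑ j, (μ i * ν j) * M = μ i * M := by
      intro i
      calc ∑ j, (μ i * ν j) * M = (∑ j, ν j) * (μ i * M) := by
            rw [Finset.sum_mul]; exact Finset.sum_congr rfl fun j _ => by ring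
      _ = μ i * M := by rw [hν1, one_mul]
    rw [Finset.sum_congr rfl fun i _ => this i, ← Finset.sum_mul, hμ1, one_mul]
  calc ∑ i, ∑ j, (μ i * ν j) * (φ i + ψ j)
      ≤ ∑ i, ∑ j, (μ i * ν j) * M := by
        refine Finset.sum_le_sum fun i _ => Finset.sum_le_sum fun j _ => ?_
        exact mul_le_mul_of_nonneg_left (le_trans (hadm i j) (hM i j))
          (mul_nonneg (hμ0 i) (hν0 j))
  _ = M := hfin

/-- Replace an admissible pair by a normalized one with sup-norm bounds, without
decreasing the value. -/
lemma dv_normalize (hNx : 0 < Nx) (hNy : 0 < Ny)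
    (C : Fin Nx → Fin Ny → ℝ) (hC : ∀ i j, 0 ≤ C i j)
    (M : ℝ) (hM : ∀ i j, C i j ≤ M)
    (μ : Fin Nx → ℝ) (ν : Fin Ny → ℝ)
    (hμ0 : ∀ i, 0 ≤ μ i) (hμ1 : ∑ i, μ i = 1)
    (hν0 : ∀ j, 0 ≤ ν j) (hν1 : ∑ j, ν j = 1)
    (φ : Fin Nx → ℝ) (ψ : Fin Ny → ℝ) (hadm : ∀ i j, φ i + ψ j ≤ C i j) :
    ∃ φ' : Fin Nx → ℝ, ∃ ψ' : Fin Ny → ℝ, (∀ i j, φ' i + ψ' j ≤ C i j) ∧ (∀ i, |φ' i| ≤ M) ∧ (∀ j, |ψ' j| ≤ M) ∧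
      (∑ i, φ i * μ i) + (∑ j, ψ j * ν j) ≤ (∑ i, φ' i * μ i) + (∑ j, ψ' j * ν j) := by
  haveI : Nonempty (Fin Nx) := Fin.pos_iff_nonempty.mp hNx
  haveI : Nonempty (Fin Ny) := Fin.pos_iff_nonempty.mp hNy
  have hx : (Finset.univ : Finset (Fin Nx)).Nonempty := Finset.univ_nonempty
  have hy : (Finset.univ : Finset (Fin Ny)).Nonempty := Finset.univ_nonempty
  have hM0 : 0 ≤ M := le_trans (hC (Classical.arbitrary _) (Classical.arbitrary _))
    (hM _ _)
  set ψ1 : Fin Ny → ℝ := fun j => Finset.univ.inf' hx (fun i => C i j - φ i) with hψ1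
  have hψ1le : ∀ i j, ψ1 j ≤ C i j - φ i := fun i j => Finset.inf'_le _ (Finset.mem_univ i)
  have hψψ1 : ∀ j, ψ j ≤ ψ1 j := fun j =>
    Finset.le_inf' hx _ (fun i _ => by linarith [hadm i j])
  set φ2 : Fin Nx → ℝ := fun i => Finset.univ.inf' hy (fun j => C i j - ψ1 j) with hφ2
  have hφ2le : ∀ i j, φ2 i ≤ C i j - ψ1 j := fun i j => Finset.inf'_le _ (Finset.mem_univ j)
  have hφφ2 : ∀ i, φ i ≤ φ2 i := fun i =>
    Finset.le_inf' hy _ (fun j _ => by linarith [hψ1le i j])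
  have hosc : ∀ i i', φ2 i ≤ φ2 i' + M := by
    intro i i'
    obtain ⟨j', -, hj'⟩ := Finset.exists_mem_eq_inf' hy (fun j => C i' j - ψ1 j)
    have h1 : φ2 i ≤ C i j' - ψ1 j' := hφ2le i j'
    have h2 : φ2 i' = C i' j' - ψ1 j' := hj'
    have h3 := hC i' j'
    have h4 := hM i j'
    linarith
  obtain ⟨i0, -, hi0⟩ := Finset.exists_mem_eq_inf' hx φ2
  set c : ℝ := Finset.univ.inf' hx φ2 with hc
  have hci : ∀ i, c ≤ φ2 i := fun i => Finset.inf'_le _ (Finset.mem_univ i)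
  set φ3 : Fin Nx → ℝ := fun i => φ2 i - c with hφ3
  have hφ3nn : ∀ i, 0 ≤ φ3 i := fun i => by simp only [hφ3]; linarith [hci i]
  have hφ3M : ∀ i, φ3 i ≤ M := by
    intro i
    have := hosc i i0
    simp only [hφ3]
    linarith [hi0]
  have hφ3i0 : φ3 i0 = 0 := by simp only [hφ3]; linarith [hi0]
  set ψ3 : Fin Ny → ℝ := fun j => Finset.univ.inf' hx (fun i => C i j - φ3 i) with hψ3
  have hψ3le : ∀ i j, ψ3 j ≤ C i j - φ3 i := fun i j => Finset.inf'_le _ (Finset.mem_univ i)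
  have hψ3ge : ∀ j, ψ1 j + c ≤ ψ3 j := by
    intro j
    refine Finset.le_inf' hx _ (fun i _ => ?_)
    have := hφ2le i j
    simp only [hφ3]
    linarith
  refine ⟨φ3, ψ3, fun i j => by linarith [hψ3le i j], fun i => ?_, fun j => ?_, ?_⟩
  · exact abs_le.mpr ⟨by linarith [hφ3nn i], hφ3M i⟩
  · refine abs_le.mpr ⟨?_, ?_⟩
    · exact Finset.le_inf' hx _ (fun i _ => by linarith [hC i j, hφ3M i])
    · have := hψ3le i0 j
      rw [hφ3i0] at this
      linarith [hM i0 j]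
  · have e1 : ∑ i, φ3 i * μ i = (∑ i, φ2 i * μ i) - c := by
      simp only [hφ3, sub_mul]
      rw [Finset.sum_sub_distrib, ← Finset.mul_sum, hμ1, mul_one]
    have e2 : (∑ j, ψ1 j * ν j) + c ≤ ∑ j, ψ3 j * ν j := by
      have : ∑ j, (ψ1 j + c) * ν j ≤ ∑ j, ψ3 j * ν j :=
        Finset.sum_le_sum fun j _ => mul_le_mul_of_nonneg_right (hψ3ge j) (hν0 j)
      calc (∑ j, ψ1 j * ν j) + c = ∑ j, (ψ1 j + c) * ν j := by
            simp only [add_mul]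
            rw [Finset.sum_add_distrib, ← Finset.mul_sum, hν1, mul_one]
      _ ≤ _ := this
    have e3 : ∑ i, φ i * μ i ≤ ∑ i, φ2 i * μ i :=
      Finset.sum_le_sum fun i _ => mul_le_mul_of_nonneg_right (hφφ2 i) (hμ0 i)
    have e4 : ∑ j, ψ j * ν j ≤ ∑ j, ψ1 j * ν j :=
      Finset.sum_le_sum fun j _ => mul_le_mul_of_nonneg_right (hψψ1 j) (hν0 j)
    rw [e1]
    linarith

end Aux

lemma mix_prob {K N : ℕ} (b : Fin K → ℝ) (hb0 : ∀ k, 0 ≤ b k) (hb1 : ∑ k, b k = 1)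
    (base : Fin K → Fin N → ℝ) (hbase : ∀ k, (∀ i, 0 ≤ base k i) ∧ ∑ i, base k i = 1) :
    (∀ i, 0 ≤ ∑ k, b k * base k i) ∧ ∑ i, ∑ k, b k * base k i = 1 := by
  constructor
  · intro i; exact Finset.sum_nonneg fun k _ => mul_nonneg (hb0 k) ((hbase k).1 i)
  · rw [Finset.sum_comm]
    calc ∑ k, ∑ i, b k * base k i = ∑ k, b k := Finset.sum_congr rfl fun k _ => by
          rw [← Finset.mul_sum, (hbase k).2, mul_one]
    _ = 1 := hb1

lemma dv_diff_bound {N K : ℕ} (hK : 0 < K) (M d : ℝ) (φ : Fin N → ℝ) (hφ : ∀ i, |φ i| ≤ M)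
    (base : Fin K → Fin N → ℝ) (hbase : ∀ k, (∀ i, 0 ≤ base k i) ∧ ∑ i, base k i = 1)
    (a a' : Fin K → ℝ) (hd : ∀ k, |a k - a' k| ≤ d) :
    (∑ i, φ i * (∑ k, a k * base k i)) - (∑ i, φ i * (∑ k, a' k * base k i))
      ≤ (K : ℝ) * (M * d) := by
  have swap : ∀ b : Fin K → ℝ,
      ∑ i, φ i * (∑ k, b k * base k i) = ∑ k, b k * (∑ i, φ i * base k i) := by
    intro b
    calc ∑ i, φ i * (∑ k, b k * base k i) = ∑ i, ∑ k, b k * (φ i * base k i) := by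
          refine Finset.sum_congr rfl fun i _ => ?_
          rw [Finset.mul_sum]; exact Finset.sum_congr rfl fun k _ => by ring
    _ = ∑ k, ∑ i, b k * (φ i * base k i) := Finset.sum_comm
    _ = ∑ k, b k * (∑ i, φ i * base k i) := by
          refine Finset.sum_congr rfl fun k _ => ?_; rw [Finset.mul_sum]
  have hS : ∀ k, |∑ i, φ i * base k i| ≤ M := by
    intro k
    calc |∑ i, φ i * base k i| ≤ ∑ i, |φ i * base k i| := Finset.abs_sum_le_sum_abs _ _
    _ = ∑ i, |φ i| * base k i := by
          refine Finset.sum_congr rfl fun i _ => ?_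
          rw [abs_mul, abs_of_nonneg ((hbase k).1 i)]
    _ ≤ ∑ i, M * base k i := Finset.sum_le_sum fun i _ =>
          mul_le_mul_of_nonneg_right (hφ i) ((hbase k).1 i)
    _ = M := by rw [← Finset.mul_sum, (hbase k).2, mul_one]
  have hd0 : 0 ≤ d := le_trans (abs_nonneg _) (hd ⟨0, hK⟩)
  rw [swap, swap, ← Finset.sum_sub_distrib]
  calc ∑ k, (a k * (∑ i, φ i * base k i) - a' k * (∑ i, φ i * base k i))
      ≤ ∑ _k : Fin K, M * d := by
        refine Finset.sum_le_sum fun k _ => ?_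
        calc a k * (∑ i, φ i * base k i) - a' k * (∑ i, φ i * base k i)
            = (a k - a' k) * (∑ i, φ i * base k i) := by ring
        _ ≤ |(a k - a' k) * (∑ i, φ i * base k i)| := le_abs_self _
        _ = |a k - a' k| * |∑ i, φ i * base k i| := abs_mul _ _
        _ ≤ d * M := mul_le_mul (hd k) (hS k) (abs_nonneg _) hd0
        _ = M * d := mul_comm _ _
  _ = (K : ℝ) * (M * d) := by
        rw [Finset.sum_const, Finset.card_univ, Fintype.card_fin, nsmul_eq_mul]
theorem stmt18 {Nx Ny Kx Ky : ℕ} (hNx : 0 < Nx) (hNy : 0 < Ny)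
    (hKx : 0 < Kx) (hKy : 0 < Ky)
    (C : Fin Nx → Fin Ny → ℝ) (hC : ∀ i j, 0 ≤ C i j)
    (μbase : Fin Kx → Fin Nx → ℝ) (νbase : Fin Ky → Fin Ny → ℝ)
    (hμbase : ∀ k, (∀ i, 0 ≤ μbase k i) ∧ ∑ i, μbase k i = 1)
    (hνbase : ∀ l, (∀ j, 0 ≤ νbase l j) ∧ ∑ j, νbase l j = 1)
    (αx α'x : Fin Kx → ℝ) (αy α'y : Fin Ky → ℝ)
    (hαx : (∀ k, 0 ≤ αx k) ∧ ∑ k, αx k = 1)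
    (hαy : (∀ l, 0 ≤ αy l) ∧ ∑ l, αy l = 1)
    (hα'x : (∀ k, 0 ≤ α'x k) ∧ ∑ k, α'x k = 1)
    (hα'y : (∀ l, 0 ≤ α'y l) ∧ ∑ l, α'y l = 1)
    (hattained : ∃ φ : Fin Nx → ℝ, ∃ ψ : Fin Ny → ℝ,
      (∀ i j, φ i + ψ j ≤ C i j) ∧
      (∑ i, φ i * (∑ k, αx k * μbase k i)) + (∑ j, ψ j * (∑ l, αy l * νbase l j))
        = dualValue C (fun i => ∑ k, αx k * μbase k i) (fun j => ∑ l, αy l * νbase l j))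
    (hattained' : ∃ φ : Fin Nx → ℝ, ∃ ψ : Fin Ny → ℝ,
      (∀ i j, φ i + ψ j ≤ C i j) ∧
      (∑ i, φ i * (∑ k, α'x k * μbase k i)) + (∑ j, ψ j * (∑ l, α'y l * νbase l j))
        = dualValue C (fun i => ∑ k, α'x k * μbase k i) (fun j => ∑ l, α'y l * νbase l j)) :
    ∀ r : ℝ,
    |dualValue C (fun i => ∑ k, αx k * μbase k i) (fun j => ∑ l, αy l * νbase l j) - r|
    ≤ |dualValue C (fun i => ∑ k, α'x k * μbase k i) (fun j => ∑ l, α'y l * νbase l j) - r|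
      + (⨆ i, ⨆ j, |C i j|) * (2 * max (Kx : ℝ) (Ky : ℝ) + 3 * min (Kx : ℝ) (Ky : ℝ))
        * max (⨆ k, |αx k - α'x k|) (⨆ l, |αy l - α'y l|) := by
  haveI : Nonempty (Fin Nx) := Fin.pos_iff_nonempty.mp hNx
  haveI : Nonempty (Fin Ny) := Fin.pos_iff_nonempty.mp hNy
  haveI : Nonempty (Fin Kx) := Fin.pos_iff_nonempty.mp hKx
  haveI : Nonempty (Fin Ky) := Fin.pos_iff_nonempty.mp hKy
  set M : ℝ := ⨆ i, ⨆ j, |C i j| with hMdef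
  have hM : ∀ i j, C i j ≤ M := by
    intro i j
    have h1 : |C i j| ≤ ⨆ j', |C i j'| :=
      le_ciSup (f := fun j' => |C i j'|) (Set.Finite.bddAbove (Set.finite_range _)) j
    have h2 : (⨆ j', |C i j'|) ≤ M :=
      le_ciSup (f := fun i => ⨆ j', |C i j'|) (Set.Finite.bddAbove (Set.finite_range _)) i
    exact le_trans (le_abs_self _) (le_trans h1 h2)
  have hM0 : 0 ≤ M := le_trans (hC (Classical.arbitrary _) (Classical.arbitrary _)) (hM _ _)
  set d : ℝ := max (⨆ k, |αx k - α'x k|) (⨆ l, |αy l - α'y l|) with hddef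
  have hdx : ∀ k, |αx k - α'x k| ≤ d := fun k =>
    le_trans (le_ciSup (f := fun k' => |αx k' - α'x k'|)
      (Set.Finite.bddAbove (Set.finite_range _)) k) (le_max_left _ _)
  have hdy : ∀ l, |αy l - α'y l| ≤ d := fun l =>
    le_trans (le_ciSup (f := fun l' => |αy l' - α'y l'|)
      (Set.Finite.bddAbove (Set.finite_range _)) l) (le_max_right _ _)
  have hd0 : 0 ≤ d := le_trans (abs_nonneg _) (hdx (Classical.arbitrary _))
  -- one-sided estimate
  have key : ∀ (bx b'x : Fin Kx → ℝ) (by' b'y : Fin Ky → ℝ),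
      ((∀ k, 0 ≤ bx k) ∧ ∑ k, bx k = 1) → ((∀ l, 0 ≤ by' l) ∧ ∑ l, by' l = 1) →
      ((∀ k, 0 ≤ b'x k) ∧ ∑ k, b'x k = 1) → ((∀ l, 0 ≤ b'y l) ∧ ∑ l, b'y l = 1) →
      (∀ k, |bx k - b'x k| ≤ d) → (∀ l, |by' l - b'y l| ≤ d) →
      (∃ φ : Fin Nx → ℝ, ∃ ψ : Fin Ny → ℝ,
        (∀ i j, φ i + ψ j ≤ C i j) ∧
        (∑ i, φ i * (∑ k, bx k * μbase k i)) + (∑ j, ψ j * (∑ l, by' l * νbase l j))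
          = dualValue C (fun i => ∑ k, bx k * μbase k i) (fun j => ∑ l, by' l * νbase l j)) →
      dualValue C (fun i => ∑ k, bx k * μbase k i) (fun j => ∑ l, by' l * νbase l j)
        ≤ dualValue C (fun i => ∑ k, b'x k * μbase k i) (fun j => ∑ l, b'y l * νbase l j)
          + M * ((Kx : ℝ) + (Ky : ℝ)) * d := by
    intro bx b'x by' b'y hbx hby hb'x hb'y hdx' hdy' hatt
    obtain ⟨φ, ψ, hadm, hval⟩ := hatt
    have pμ := mix_prob bx hbx.1 hbx.2 μbase hμbase
    have pν := mix_prob by' hby.1 hby.2 νbase hνbase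
    have pμ' := mix_prob b'x hb'x.1 hb'x.2 μbase hμbase
    have pν' := mix_prob b'y hb'y.1 hb'y.2 νbase hνbase
    obtain ⟨φ', ψ', hadm', hφ'M, hψ'M, hval'⟩ :=
      dv_normalize hNx hNy C hC M hM _ _ pμ.1 pμ.2 pν.1 pν.2 φ ψ hadm
    have hub : (∑ i, φ' i * (∑ k, b'x k * μbase k i))
        + (∑ j, ψ' j * (∑ l, b'y l * νbase l j))
        ≤ dualValue C (fun i => ∑ k, b'x k * μbase k i)
            (fun j => ∑ l, b'y l * νbase l j) := by
      rw [dualValue]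
      refine le_csSup ⟨M, ?_⟩ ⟨φ', ψ', hadm', rfl⟩
      rintro r ⟨φ0, ψ0, h0, rfl⟩
      exact dv_mem_le C M hM _ _ pμ'.1 pμ'.2 pν'.1 pν'.2 φ0 ψ0 h0
    have hx' := dv_diff_bound hKx M d φ' hφ'M μbase hμbase bx b'x hdx'
    have hy' := dv_diff_bound hKy M d ψ' hψ'M νbase hνbase by' b'y hdy'
    have : dualValue C (fun i => ∑ k, bx k * μbase k i) (fun j => ∑ l, by' l * νbase l j)
        ≤ (∑ i, φ' i * (∑ k, bx k * μbase k i)) + (∑ j, ψ' j * (∑ l, by' l * νbase l j)) := by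
      rw [← hval]; exact hval'
    have hfin : M * ((Kx : ℝ) + (Ky : ℝ)) * d = (Kx : ℝ) * (M * d) + (Ky : ℝ) * (M * d) := by
      ring
    linarith
  have h1 := key αx α'x αy α'y hαx hαy hα'x hα'y hdx hdy hattained
  have h2 := key α'x αx α'y αy hα'x hα'y hαx hαy
    (fun k => by rw [abs_sub_comm]; exact hdx k)
    (fun l => by rw [abs_sub_comm]; exact hdy l) hattained'
  intro r
  set Jα := dualValue C (fun i => ∑ k, αx k * μbase k i) (fun j => ∑ l, αy l * νbase l j)
  set Jα' := dualValue C (fun i => ∑ k, α'x k * μbase k i) (fun j => ∑ l, α'y l * νbase l j)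
  have hKK : (Kx : ℝ) + (Ky : ℝ) ≤ 2 * max (Kx : ℝ) (Ky : ℝ) + 3 * min (Kx : ℝ) (Ky : ℝ) := by
    have h0x : (0 : ℝ) ≤ Kx := Nat.cast_nonneg _
    have h0y : (0 : ℝ) ≤ Ky := Nat.cast_nonneg _
    rcases le_total (Kx : ℝ) (Ky : ℝ) with h | h
    · rw [max_eq_right h, min_eq_left h]; linarith
    · rw [max_eq_left h, min_eq_right h]; linarith
  have hE : M * ((Kx : ℝ) + (Ky : ℝ)) * d
      ≤ M * (2 * max (Kx : ℝ) (Ky : ℝ) + 3 * min (Kx : ℝ) (Ky : ℝ)) * d :=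
    mul_le_mul_of_nonneg_right (mul_le_mul_of_nonneg_left hKK hM0) hd0
  have habs : |Jα - Jα'| ≤ M * ((Kx : ℝ) + (Ky : ℝ)) * d :=
    abs_sub_le_iff.mpr ⟨by linarith, by linarith⟩
  calc |Jα - r| = |(Jα' - r) + (Jα - Jα')| := by congr 1; ring
  _ ≤ |Jα' - r| + |Jα - Jα'| := abs_add_le _ _
  _ ≤ |Jα' - r| + M * (2 * max (Kx : ℝ) (Ky : ℝ) + 3 * min (Kx : ℝ) (Ky : ℝ)) * d := by
      linarith
end
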